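/- arXiv:1407.5900 — 2 statements merged into one kernel-verified Lean document; each statement's English description precedes it below -/
import Mathlib

section
/- Let R be a commutative unital ring and A an unbounded cochain complex of R-modules. If A is cofibrant, i.e. the unique map 0 → A has the left lifting property with respect to every degreewise surjective quasi-isomorphism of cochain complexes of R-modules, then A^n is a projective R-module for every n ∈ ℤ. -/
open CategoryTheory Limits ZeroObject

noncomputable section

variable (R : Type) [CommRing R]

/-- The category of unbounded cochain complexes of `R`-modules. -/
abbrev Cx := CochainComplex (ModuleCat.{0} R) ℤ

/-- The underlying module of `D_R(n)` in degree `i`: it is (isomorphic to) `R` if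
`i = n` or `i = n+1`, and the zero module otherwise. -/
abbrev diskFun (n i : ℤ) : Type := PLift (i = n ∨ i = n + 1) → R

/-- The differential of the disk complex `D_R(n)`. -/
def diskD (n i j : ℤ) : (diskFun R n i) →ₗ[R] (diskFun R n j) where
  toFun f _ := if hij : i = n ∧ j = n + 1 then f ⟨Or.inl hij.1⟩ else 0
  map_add' f g := by
    funext h
    by_cases hij : i = n ∧ j = n + 1 <;> simp [hij]
  map_smul' r f := by
    funext h
    by_cases hij : i = n ∧ j = n + 1 <;> simp [hij]

lemma diskD_apply (n i j : ℤ) (f : diskFun R n i) (h : PLift (j = n ∨ j = n + 1)) :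
    diskD R n i j f h = if hij : i = n ∧ j = n + 1 then f ⟨Or.inl hij.1⟩ else 0 := rfl

/-- The disk complex `D_R(n)`, with `R` in degrees `n` and `n+1`, the identity as the only
non-trivial differential, and `0` elsewhere. -/
def disk (n : ℤ) : Cx R where
  X i := ModuleCat.of R (diskFun R n i)
  d i j := ModuleCat.ofHom (diskD R n i j)
  shape i j hij := by
    apply ModuleCat.hom_ext
    apply LinearMap.ext
    intro f
    funext h
    have hn : ¬ (i = n ∧ j = n + 1) := by
      rintro ⟨rfl, rfl⟩
      exact hij rfl
    show diskD R n i j f h = _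
    rw [diskD_apply, dif_neg hn]
    rfl
  d_comp_d' i j k _ _ := by
    apply ModuleCat.hom_ext
    apply LinearMap.ext
    intro f
    funext h
    show diskD R n j k (diskD R n i j f) h = _
    rw [diskD_apply]
    split_ifs with hjk
    · rw [diskD_apply]
      have hn : ¬ (i = n ∧ j = n + 1) := by
        obtain ⟨h1, h2⟩ := hjk
        rintro ⟨rfl, h3⟩
        omega
      rw [dif_neg hn]
      rfl
    · rfl

/-- The underlying module of `S_R(n)` in degree `i`. -/
abbrev sphereFun (n i : ℤ) : Type := PLift (i = n) → R

/-- The sphere complex `S_R(n)`, with `R` in degree `n` and `0` elsewhere. -/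
def sphere (n : ℤ) : Cx R where
  X i := ModuleCat.of R (sphereFun R n i)
  d _ _ := 0
  shape _ _ _ := rfl
  d_comp_d' := by intros; simp

/-- The degreewise component of the map `S_R(n+1) ⟶ D_R(n)`. -/
def sphereToDiskHom (n i : ℤ) : (sphereFun R (n + 1) i) →ₗ[R] (diskFun R n i) where
  toFun g _ := if hi : i = n + 1 then g ⟨hi⟩ else 0
  map_add' g₁ g₂ := by
    funext h
    by_cases hi : i = n + 1 <;> simp [hi]
  map_smul' r g := by
    funext h
    by_cases hi : i = n + 1 <;> simp [hi]

lemma sphereToDiskHom_apply (n i : ℤ) (g : sphereFun R (n + 1) i)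
    (h : PLift (i = n ∨ i = n + 1)) :
    sphereToDiskHom R n i g h = if hi : i = n + 1 then g ⟨hi⟩ else 0 := rfl

/-- The map `S_R(n+1) ⟶ D_R(n)` which is the identity of `R` in degree `n+1`. -/
def sphereToDisk (n : ℤ) : sphere R (n + 1) ⟶ disk R n where
  f i := ModuleCat.ofHom (sphereToDiskHom R n i)
  comm' i j _ := by
    apply ModuleCat.hom_ext
    apply LinearMap.ext
    intro (g : sphereFun R (n + 1) i)
    funext h
    show diskD R n i j (sphereToDiskHom R n i g) h = sphereToDiskHom R n j ((0 : _ →ₗ[R] _) g) h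
    simp only [LinearMap.zero_apply, map_zero, Pi.zero_apply]
    rw [diskD_apply]
    split_ifs with hij
    · rw [sphereToDiskHom_apply]
      have hn : ¬ i = n + 1 := by
        obtain ⟨h1, h2⟩ := hij
        omega
      rw [dif_neg hn]
    · rfl

/-- A map of cochain complexes is degreewise surjective if it is surjective in each degree. -/
def DegSurj {M N : Cx R} (p : M ⟶ N) : Prop := ∀ n : ℤ, Function.Surjective (p.f n)



/-- `f` is a retract of `g` in the arrow category: there are morphisms of arrows
`f → g → f` composing to the identity of `f`. -/
def IsRetractOf {C : Type 1} [Category.{0} C] {X Y X' Y' : C} (f : X ⟶ Y) (g : X' ⟶ Y') : Prop :=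
  ∃ (i : Arrow.mk f ⟶ Arrow.mk g) (r : Arrow.mk g ⟶ Arrow.mk f), i ≫ r = 𝟙 (Arrow.mk f)

/-- The generating trivial cofibration `0 ⟶ D_R(n)`. -/
def zeroToDisk (n : ℤ) : (0 : Cx R) ⟶ disk R n := 0

/-- A cochain complex `A` is cofibrant if `0 ⟶ A` has the left lifting property with respect
to every degreewise surjective quasi-isomorphism. -/
def Cofibrant (A : Cx R) : Prop :=
  ∀ {X Y : Cx R} (p : X ⟶ Y), (∀ n : ℤ, Function.Surjective (p.f n)) → QuasiIso p →
    HasLiftingProperty (0 : (0 : Cx R) ⟶ A) p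

/-- A morphism of cochain complexes is a cofibration (for the projective model structure) if it
has the left lifting property with respect to every degreewise surjective quasi-isomorphism. -/
def Cofib {M N : Cx R} (i : M ⟶ N) : Prop :=
  ∀ {X Y : Cx R} (p : X ⟶ Y), (∀ n : ℤ, Function.Surjective (p.f n)) → QuasiIso p →
    HasLiftingProperty i p

/-!
Maps `K ⟶ double (𝟙 M)` into the disk on `M` in degrees `i₀ → i₁` correspond to maps
`K.X i₁ ⟶ M`, and disks are acyclic. So an epimorphism `E ⟶ F` induces a degreewise epimorphic
quasi-isomorphism of disks, and lifting `A ⟶ double (𝟙 F)` through it lifts any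
`A.X i₁ ⟶ F` through `E ⟶ F`.
-/

namespace HomologicalComplex

variable {C : Type*} [Category* C] [Abelian C] {ι : Type*} {c : ComplexShape ι}
  {i₀ i₁ : ι} (hi₀₁ : c.Rel i₀ i₁)

open scoped Classical in
def mkHomToDoubleId (h : i₀ ≠ i₁) {K : HomologicalComplex C c} {M : C} (φ : K.X i₁ ⟶ M) :
    K ⟶ double (𝟙 M) hi₀₁ where
  f k :=
    if hk₀ : k = i₀ then
      eqToHom (by rw [hk₀]) ≫ K.d i₀ i₁ ≫ φ ≫ (doubleXIso₀ (𝟙 M) hi₀₁).inv ≫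
        eqToHom (by rw [hk₀])
    else if hk₁ : k = i₁ then
      eqToHom (by rw [hk₁]) ≫ φ ≫ (doubleXIso₁ (𝟙 M) hi₀₁ h).inv ≫
        eqToHom (by rw [hk₁])
    else 0
  comm' k k' hk := by
    by_cases h₁ : k' = i₁
    · subst h₁
      obtain rfl := c.prev_eq hk hi₀₁
      simp [dif_neg h.symm, double_d _ hi₀₁ h]
    · rw [double_d_eq_zero₁ _ _ _ _ h₁, comp_zero, dif_neg h₁]
      split_ifs with h₀
      · subst h₀
        simp
      · rw [comp_zero]

@[simp]
lemma mkHomToDoubleId_f₀ (h : i₀ ≠ i₁) {K : HomologicalComplex C c} {M : C}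
    (φ : K.X i₁ ⟶ M) :
    (mkHomToDoubleId hi₀₁ h φ).f i₀ =
      K.d i₀ i₁ ≫ φ ≫ (doubleXIso₀ (𝟙 M) hi₀₁).inv := by
  simp [mkHomToDoubleId]

@[simp]
lemma mkHomToDoubleId_f₁ (h : i₀ ≠ i₁) {K : HomologicalComplex C c} {M : C}
    (φ : K.X i₁ ⟶ M) :
    (mkHomToDoubleId hi₀₁ h φ).f i₁ = φ ≫ (doubleXIso₁ (𝟙 M) hi₀₁ h).inv := by
  simp [mkHomToDoubleId, dif_neg h.symm]

lemma exactAt_double_id (h : i₀ ≠ i₁) (M : C) (k : ι) :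
    (double (𝟙 M) hi₀₁).ExactAt k := by
  by_cases h₀ : k = i₀
  · subst h₀
    rw [exactAt_iff' _ (c.prev k) k i₁ rfl (c.next_eq' hi₀₁),
      ShortComplex.exact_iff_mono _ (double_d_eq_zero₁ (𝟙 M) hi₀₁ _ _ h)]
    change Mono ((double (𝟙 M) hi₀₁).d k i₁)
    rw [double_d _ hi₀₁ h]
    infer_instance
  by_cases h₁ : k = i₁
  · subst h₁
    rw [exactAt_iff' _ i₀ k (c.next k) (c.prev_eq' hi₀₁) rfl,
      ShortComplex.exact_iff_epi _ (double_d_eq_zero₀ (𝟙 M) hi₀₁ _ _ (Ne.symm h))]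
    change Epi ((double (𝟙 M) hi₀₁).d i₀ k)
    rw [double_d _ hi₀₁ h]
    infer_instance
  exact ShortComplex.exact_of_isZero_X₂ _ (isZero_double_X (𝟙 M) hi₀₁ k h₀ h₁)

def mapDoubleId (h : i₀ ≠ i₁) {M N : C} (q : M ⟶ N) :
    double (𝟙 M) hi₀₁ ⟶ double (𝟙 N) hi₀₁ :=
  mkHomToDoubleId hi₀₁ h ((doubleXIso₁ (𝟙 M) hi₀₁ h).hom ≫ q)

instance epi_mapDoubleId_f (h : i₀ ≠ i₁) {M N : C} (q : M ⟶ N) [Epi q] (k : ι) :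
    Epi ((mapDoubleId hi₀₁ h q).f k) := by
  by_cases h₀ : k = i₀
  · subst h₀
    rw [mapDoubleId, mkHomToDoubleId_f₀, double_d _ hi₀₁ h]
    infer_instance
  by_cases h₁ : k = i₁
  · subst h₁
    rw [mapDoubleId, mkHomToDoubleId_f₁]
    infer_instance
  exact (isZero_double_X (𝟙 N) hi₀₁ k h₀ h₁).epi _

lemma quasiIso_mapDoubleId (h : i₀ ≠ i₁) {M N : C} (q : M ⟶ N) :
    QuasiIso (mapDoubleId hi₀₁ h q) :=
  ⟨fun k ↦ (quasiIsoAt_iff_exactAt _ k (exactAt_double_id hi₀₁ h M k)).2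
    (exactAt_double_id hi₀₁ h N k)⟩

theorem projective_X_of_hasLiftingProperty {A : HomologicalComplex C c}
    (hA : ∀ {X Y : HomologicalComplex C c} (p : X ⟶ Y), (∀ k, Epi (p.f k)) → QuasiIso p →
      HasLiftingProperty (0 : 0 ⟶ A) p)
    (hi₀₁ : c.Rel i₀ i₁) (h : i₀ ≠ i₁) : Projective (A.X i₁) where
  factors {E F} φ e _ := by
    have sq : CommSq (0 : (0 : HomologicalComplex C c) ⟶ _) 0 (mapDoubleId hi₀₁ h e)
        (mkHomToDoubleId hi₀₁ h φ) := ⟨by simp⟩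
    obtain ⟨⟨⟨l, -, hl⟩⟩⟩ :=
      (hA _ (fun _ ↦ inferInstance) (quasiIso_mapDoubleId hi₀₁ h e)).sq_hasLift sq
    refine ⟨l.f i₁ ≫ (doubleXIso₁ (𝟙 E) hi₀₁ h).hom, ?_⟩
    have hl₁ := congrArg (fun g ↦ g.f i₁) hl
    simp only [comp_f, mapDoubleId, mkHomToDoubleId_f₁] at hl₁
    rw [← cancel_mono (doubleXIso₁ (𝟙 F) hi₀₁ h).inv, ← hl₁]
    simp only [Category.assoc]

end HomologicalComplex

theorem statement_3 (A : Cx R) (hA : Cofibrant R A) : ∀ n : ℤ, Module.Projective R (A.X n) := by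
  intro n
  rw [IsProjective.iff_projective]
  exact HomologicalComplex.projective_X_of_hasLiftingProperty
    (fun p hp ↦ hA p fun k ↦ (ModuleCat.epi_iff_surjective _).1 (hp k))
    (show (ComplexShape.up ℤ).Rel (n - 1) n by simp) (by omega)

end
end

section
/- Let R be a commutative unital ring and i : M → N a morphism of unbounded cochain complexes of R-modules. Then i has the left lifting property with respect to every degreewise surjective cochain map if and only if i is degreewise injective and its cokernel coker(i) is a projective object of the category of cochain complexes of R-modules. Moreover, any such i is a quasi-isomorphism and has the left lifting property with respect to every degreewise surjective quasi-isomorphism. -/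
open CategoryTheory Limits ZeroObject

noncomputable section

variable (R : Type) [CommRing R]

/-!
In complexes of modules the degreewise surjections are exactly the epimorphisms, and in any
abelian category a map `i` lifts against all epimorphisms iff it is a split mono with projective
cokernel: lifting against `M ⟶ 0` gives a retraction `r`, and given `r`, a square with top `f`
and bottom `g` is solved by `r ≫ f + π ≫ u`, where `u` lifts through the epimorphism the map
`coker i ⟶ Y` induced by `(𝟙 - r ≫ i) ≫ g`.

A projective complex `P` is a retract of the contractible mapping cocone of `𝟙 P`, hence is
contractible. So `𝟙 - r ≫ i`, which factors through `coker i`, is null-homotopic and `r` is a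
homotopy inverse of `i`.
-/

namespace CategoryTheory

variable {C : Type*} [Category C]

section Preadditive

variable [Preadditive C] {A B : C} {i : A ⟶ B} [HasCokernel i] {r : B ⟶ A}

def cokernelSectionOfRetraction (hr : i ≫ r = 𝟙 A) : cokernel i ⟶ B :=
  cokernel.desc i (𝟙 B - r ≫ i) (by simp [Preadditive.comp_sub, reassoc_of% hr])

@[simp]
lemma π_cokernelSectionOfRetraction (hr : i ≫ r = 𝟙 A) :
    cokernel.π i ≫ cokernelSectionOfRetraction hr = 𝟙 B - r ≫ i :=
  cokernel.π_desc _ _ _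

lemma hasLiftingProperty_of_retraction {X Y : C} (p : X ⟶ Y) [Epi p] (hr : i ≫ r = 𝟙 A)
    [Projective (cokernel i)] : HasLiftingProperty i p where
  sq_hasLift {f g} sq := by
    let u := Projective.factorThru (cokernelSectionOfRetraction hr ≫ g) p
    refine ⟨⟨⟨r ≫ f + cokernel.π i ≫ u, ?_, ?_⟩⟩⟩
    · simp [reassoc_of% hr]
    · simp [u, sq.w, reassoc_of% (π_cokernelSectionOfRetraction hr), Preadditive.sub_comp]

end Preadditive

section Abelian

variable [Abelian C] {A B : C}

lemma exists_retraction_of_projective_cokernel (i : A ⟶ B) [Mono i] [Projective (cokernel i)] :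
    ∃ r : B ⟶ A, i ≫ r = 𝟙 A := by
  obtain ⟨s, hs⟩ := Projective.factors (𝟙 (cokernel i)) (cokernel.π i)
  have hw : (𝟙 B - cokernel.π i ≫ s) ≫ cokernel.π i = 0 := by
    simp [Preadditive.sub_comp, hs]
  refine ⟨Abelian.monoLift i _ hw, ?_⟩
  rw [← cancel_mono i, Category.assoc, Abelian.monoLift_comp]
  simp [Preadditive.comp_sub, cokernel.condition_assoc]

lemma hasLiftingProperty_epi_iff (i : A ⟶ B) :
    (∀ {X Y : C} (p : X ⟶ Y) [Epi p], HasLiftingProperty i p) ↔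
      Mono i ∧ Projective (cokernel i) := by
  constructor
  · intro h
    obtain ⟨⟨r, hr, -⟩⟩ := ((h (0 : A ⟶ 0)).sq_hasLift
      (CommSq.mk (f := 𝟙 A) (g := i) (h := 0) (i := 0) (by simp))).exists_lift
    have : IsSplitMono i := ⟨⟨r, hr⟩⟩
    refine ⟨inferInstance, ⟨fun {E X} f e _ => ?_⟩⟩
    obtain ⟨⟨l, hl, hle⟩⟩ := ((h e).sq_hasLift
      (CommSq.mk (f := 0) (g := i) (h := e) (i := cokernel.π i ≫ f) (by simp))).exists_lift
    exact ⟨cokernel.desc i l hl, by simp [← cancel_epi (cokernel.π i), hle]⟩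
  · rintro ⟨_, _⟩ X Y p _
    obtain ⟨r, hr⟩ := exists_retraction_of_projective_cokernel i
    exact hasLiftingProperty_of_retraction p hr

end Abelian

end CategoryTheory

namespace CochainComplex

open HomologicalComplex

variable {C : Type*} [Category C] [Preadditive C] [HasBinaryBiproducts C]

instance mappingCocone.epi_fst {K L : CochainComplex C ℤ} (φ : K ⟶ L) :
    Epi (mappingCocone.fst φ) :=
  epi_of_epi_f _ fun p => (⟨⟨_, mappingCocone.inl_v_fst_f φ p⟩⟩ : IsSplitEpi _).epi

def mappingCocone.homotopyToZeroOfId (K : CochainComplex C ℤ) :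
    Homotopy (𝟙 (mappingCocone (𝟙 K))) 0 :=
  (Homotopy.ofEq (CategoryTheory.Functor.map_id _ _).symm).trans
    (((mappingCone.homotopyToZeroOfId K).shift (-1)).trans
      (Homotopy.ofEq (CategoryTheory.Functor.map_zero _ _ _)))

def homotopyToZeroOfProjective (P : CochainComplex C ℤ) [Projective P] : Homotopy (𝟙 P) 0 :=
  let e := mappingCocone.fst (𝟙 P)
  let s := Projective.factorThru (𝟙 P) e
  (Homotopy.ofEq (by simp [s, e])).trans
    ((((mappingCocone.homotopyToZeroOfId P).compRight e).compLeft s).trans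
      (Homotopy.ofEq (by simp)))

def homotopyEquivOfRetraction {M N : CochainComplex C ℤ} {i : M ⟶ N} [HasCokernel i]
    [Projective (cokernel i)] {r : N ⟶ M} (hr : i ≫ r = 𝟙 M) : HomotopyEquiv M N where
  hom := i
  inv := r
  homotopyHomInvId := Homotopy.ofEq hr
  homotopyInvHomId := (Homotopy.equivSubZero.symm <|
    (Homotopy.ofEq (by simp)).trans <|
      (((homotopyToZeroOfProjective _).compRight (cokernelSectionOfRetraction hr)).compLeft
        (cokernel.π i)).trans (Homotopy.ofEq (by simp))).symm

end CochainComplex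

namespace HomologicalComplex

variable {R : Type*} [Ring R] {ι : Type*} {c : ComplexShape ι}
  {X Y : HomologicalComplex (ModuleCat R) c}

lemma epi_iff_surjective_f (p : X ⟶ Y) : Epi p ↔ ∀ n, Function.Surjective (p.f n) := by
  simp only [← ModuleCat.epi_iff_surjective]
  exact ⟨fun _ _ => inferInstance, epi_of_epi_f p⟩

lemma mono_iff_injective_f (p : X ⟶ Y) : Mono p ↔ ∀ n, Function.Injective (p.f n) := by
  simp only [← ModuleCat.mono_iff_injective]
  exact ⟨fun _ _ => inferInstance, mono_of_mono_f p⟩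

end HomologicalComplex

theorem statement_6 {M N : Cx R} (i : M ⟶ N) :
    ((∀ {X Y : Cx R} (p : X ⟶ Y), (∀ n : ℤ, Function.Surjective (p.f n)) →
        HasLiftingProperty i p) ↔
      ((∀ n : ℤ, Function.Injective (i.f n)) ∧ Projective (cokernel i))) ∧
    ((∀ {X Y : Cx R} (p : X ⟶ Y), (∀ n : ℤ, Function.Surjective (p.f n)) →
        HasLiftingProperty i p) →
      (QuasiIso i ∧ Cofib R i)) := by
  have hLLP : (∀ {X Y : Cx R} (p : X ⟶ Y), (∀ n : ℤ, Function.Surjective (p.f n)) →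
      HasLiftingProperty i p) ↔ Mono i ∧ Projective (cokernel i) := by
    simp only [← HomologicalComplex.epi_iff_surjective_f]
    exact hasLiftingProperty_epi_iff i
  refine ⟨by rw [hLLP, HomologicalComplex.mono_iff_injective_f],
    fun h => ⟨?_, fun p hp _ => h p hp⟩⟩
  obtain ⟨_, _⟩ := hLLP.1 h
  obtain ⟨r, hr⟩ := exists_retraction_of_projective_cokernel i
  exact (CochainComplex.homotopyEquivOfRetraction hr).quasiIso_hom
end
end
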